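/- Let S be a finite semigroup that is a left regular band of groups, with idempotent-power map ω. Then for all s, t ∈ S one has ω(s·t) ∼ (ω s)·(ω t). (Equivalently, on the quotient T = S/∼ the map T ↦ T^ω is a semigroup morphism: supp((st)^ω) = supp(s^ω)·supp(t^ω).) -/

import Mathlib

/-- The support relation `s ∼ t` on a left regular band of groups:
`(ω s)·t = s` and `(ω t)·s = t`. -/
def LRBGsim {S : Type*} [Mul S] (ω : S → S) (s t : S) : Prop :=
  ω s * t = s ∧ ω t * s = t

/-!
Adjoining an identity turns `ω s = s^(n+1)` into a monoid power, so `ω s` can be split off as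
`s * s^n` or `s^n * s` at will. Then `ω (s t) = s t ⋯ s t` begins with `s` and ends with `t`,
which by (LRBG2) and `t · t^ω = t` gives `ω (s t) · ω s · ω t = ω (s t)`; and
`ω s · ω t = s^a · s t · t^b`, which (LRBG2) for `s t` shows is fixed by right multiplication
with `ω (s t)`. Both sides of `∼` are idempotent, hence fixed by `ω`, which finishes the proof.
-/

namespace LRBG

variable {S : Type*} [Semigroup S] {ω : S → S}

theorem coe_iterate_mul_right (s : S) (n : ℕ) :
    (((fun t => t * s)^[n] s : S) : WithOne S) = (s : WithOne S) ^ (n + 1) := by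
  induction n with
  | zero => simp
  | succ n ih => rw [Function.iterate_succ_apply', WithOne.coe_mul, ih, pow_succ _ (n + 1)]

theorem exists_coe_omega_eq_pow (hpow : ∀ s : S, ∃ n : ℕ, ω s = (fun t => t * s)^[n] s)
    (s : S) : ∃ n : ℕ, (ω s : WithOne S) = (s : WithOne S) ^ (n + 1) := by
  obtain ⟨n, hn⟩ := hpow s
  exact ⟨n, by rw [hn, coe_iterate_mul_right]⟩

theorem omega_eq_self_of_isIdempotentElem
    (hpow : ∀ s : S, ∃ n : ℕ, ω s = (fun t => t * s)^[n] s) {x : S}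
    (hx : IsIdempotentElem x) :
    ω x = x := by
  obtain ⟨n, hn⟩ := exists_coe_omega_eq_pow hpow x
  have hx' : IsIdempotentElem (x : WithOne S) := by
    rw [IsIdempotentElem, ← WithOne.coe_mul, hx.eq]
  exact WithOne.coe_injective (hn.trans (hx'.pow_succ_eq n))

theorem mul_omega (hpow : ∀ s : S, ∃ n : ℕ, ω s = (fun t => t * s)^[n] s)
    (lrbg1 : ∀ s : S, ω s * s = s) (x : S) : x * ω x = x := by
  obtain ⟨n, hn⟩ := exists_coe_omega_eq_pow hpow x
  have hcomm : (x : WithOne S) * ω x = ω x * x := by rw [hn, ← pow_succ, ← pow_succ']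
  exact WithOne.coe_injective (by rw [WithOne.coe_mul, hcomm, ← WithOne.coe_mul, lrbg1])

theorem coe_mul_mul_omega (hpow : ∀ s : S, ∃ n : ℕ, ω s = (fun t => t * s)^[n] s)
    (lrbg1 : ∀ s : S, ω s * s = s) (lrbg2 : ∀ s t : S, s * t * ω s = s * t)
    (x : S) (y : WithOne S) : (x : WithOne S) * y * ω x = x * y := by
  cases y with
  | one => rw [mul_one, ← WithOne.coe_mul, mul_omega hpow lrbg1]
  | coe t => rw [← WithOne.coe_mul, ← WithOne.coe_mul, lrbg2]

theorem isIdempotentElem_omega_mul_omega (hidem : ∀ s : S, ω s * ω s = ω s)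
    (hpow : ∀ s : S, ∃ n : ℕ, ω s = (fun t => t * s)^[n] s)
    (lrbg2 : ∀ s t : S, s * t * ω s = s * t) (s t : S) :
    IsIdempotentElem (ω s * ω t) := by
  have hωs : ω (ω s) = ω s := omega_eq_self_of_isIdempotentElem hpow (hidem s)
  have hright : ω s * ω t * ω s = ω s * ω t := by simpa only [hωs] using lrbg2 (ω s) (ω t)
  rw [IsIdempotentElem, ← mul_assoc, hright, mul_assoc, hidem]

theorem omega_mul_mul_omega_left (hpow : ∀ s : S, ∃ n : ℕ, ω s = (fun t => t * s)^[n] s)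
    (lrbg1 : ∀ s : S, ω s * s = s) (lrbg2 : ∀ s t : S, s * t * ω s = s * t) (s t : S) :
    ω (s * t) * ω s = ω (s * t) := by
  obtain ⟨k, hk⟩ := exists_coe_omega_eq_pow hpow (s * t)
  have hsplit : (ω (s * t) : WithOne S) = s * (t * (↑(s * t)) ^ k) := by
    rw [hk, pow_succ', WithOne.coe_mul, mul_assoc]
  refine WithOne.coe_injective ?_
  rw [WithOne.coe_mul, hsplit, coe_mul_mul_omega hpow lrbg1 lrbg2]

theorem omega_mul_mul_omega_right (hpow : ∀ s : S, ∃ n : ℕ, ω s = (fun t => t * s)^[n] s)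
    (lrbg1 : ∀ s : S, ω s * s = s) (s t : S) :
    ω (s * t) * ω t = ω (s * t) := by
  obtain ⟨k, hk⟩ := exists_coe_omega_eq_pow hpow (s * t)
  have hsplit : (ω (s * t) : WithOne S) = (↑(s * t)) ^ k * s * t := by
    rw [hk, pow_succ, WithOne.coe_mul, mul_assoc]
  refine WithOne.coe_injective ?_
  rw [WithOne.coe_mul, hsplit, mul_assoc _ (t : WithOne S), ← WithOne.coe_mul t,
    mul_omega hpow lrbg1]

theorem omega_mul_omega_mul_omega_mul (hpow : ∀ s : S, ∃ n : ℕ, ω s = (fun t => t * s)^[n] s)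
    (lrbg1 : ∀ s : S, ω s * s = s) (lrbg2 : ∀ s t : S, s * t * ω s = s * t) (s t : S) :
    ω s * ω t * ω (s * t) = ω s * ω t := by
  obtain ⟨a, ha⟩ := exists_coe_omega_eq_pow hpow s
  obtain ⟨b, hb⟩ := exists_coe_omega_eq_pow hpow t
  have hsplit :
      (ω s : WithOne S) * ω t = (s : WithOne S) ^ a * (↑(s * t) * (t : WithOne S) ^ b) := by
    rw [ha, hb, pow_succ, pow_succ', WithOne.coe_mul]
    simp only [mul_assoc]
  refine WithOne.coe_injective ?_
  rw [WithOne.coe_mul, WithOne.coe_mul, hsplit, mul_assoc,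
    coe_mul_mul_omega hpow lrbg1 lrbg2]

end LRBG

open LRBG in
theorem lrbg_omega_of_mul_sim_general {S : Type*} [Semigroup S] (ω : S → S)
    (hidem : ∀ s : S, ω s * ω s = ω s)
    (hpow : ∀ s : S, ∃ n : ℕ, ω s = (fun t => t * s)^[n] s)
    (lrbg1 : ∀ s : S, ω s * s = s)
    (lrbg2 : ∀ s t : S, s * t * ω s = s * t) :
    ∀ s t : S, LRBGsim ω (ω (s * t)) (ω s * ω t) := by
  intro s t
  have hωe : ω (ω (s * t)) = ω (s * t) := omega_eq_self_of_isIdempotentElem hpow (hidem (s * t))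
  have hωf : ω (ω s * ω t) = ω s * ω t :=
    omega_eq_self_of_isIdempotentElem hpow (isIdempotentElem_omega_mul_omega hidem hpow lrbg2 s t)
  constructor
  · rw [hωe, ← mul_assoc, omega_mul_mul_omega_left hpow lrbg1 lrbg2,
      omega_mul_mul_omega_right hpow lrbg1]
  · rw [hωf, omega_mul_omega_mul_omega_mul hpow lrbg1 lrbg2]

/-- In a finite LRBG, `(s·t)^ω ∼ s^ω·t^ω` for all `s, t`;
equivalently, on the quotient `S/∼` the map `T ↦ T^ω` is a semigroup morphism. -/
theorem lrbg_omega_of_mul_sim {S : Type*} [Semigroup S] [Fintype S] (ω : S → S)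
    (hidem : ∀ s : S, ω s * ω s = ω s)
    (hpow : ∀ s : S, ∃ n : ℕ, ω s = (fun t => t * s)^[n] s)
    (lrbg1 : ∀ s : S, ω s * s = s)
    (lrbg2 : ∀ s t : S, s * t * ω s = s * t) :
    ∀ s t : S, LRBGsim ω (ω (s * t)) (ω s * ω t) :=
  lrbg_omega_of_mul_sim_general ω hidem hpow lrbg1 lrbg2
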